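/- Let V > 0 and k > 2, and set K = exp(max(1, 4k²/(k−2)²)). There exists a finite constant C, depending only on V, such that for every Borel probability measure G1 on ℝ with mean zero and variance bounded by V, every σ ≥ 1, every real μ with |μ| < σ, and every s > K: ∫_{−∞}^{∞} S_{G1,σ}(s, x) φ_σ(x − μ) dx ≤ C · (1 − G1((−∞, s])) · s^{(k−2)/2} + s^{−k²/2}. -/

import Mathlib

open MeasureTheory Real Set

/-- The `N(0, σ²)` density `φ_σ(t) = (2πσ²)^{-1/2} exp(-t²/(2σ²))`. -/
noncomputable def gaussDens (σ t : ℝ) : ℝ :=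
  (Real.sqrt (2 * Real.pi * σ ^ 2))⁻¹ * Real.exp (-t ^ 2 / (2 * σ ^ 2))

/-- Marginal density `f_{G,σ}(x) = ∫ φ_σ(x-θ) dG(θ)`. -/
noncomputable def margDens (G : Measure ℝ) (σ x : ℝ) : ℝ :=
  ∫ θ, gaussDens σ (x - θ) ∂G

/-- Posterior mean `m_{G,σ}(x) = (∫ θ φ_σ(x-θ) dG(θ)) / f_{G,σ}(x)`. -/
noncomputable def postMean (G : Measure ℝ) (σ x : ℝ) : ℝ :=
  (∫ θ, θ * gaussDens σ (x - θ) ∂G) / margDens G σ x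

/-- Posterior survival probability `S_{G,σ}(s,x) = (∫_{(s,∞)} φ_σ(x-θ) dG(θ)) / f_{G,σ}(x)`. -/
noncomputable def postSurv (G : Measure ℝ) (σ s x : ℝ) : ℝ :=
  (∫ θ in Set.Ioi s, gaussDens σ (x - θ)  ∂G) / margDens G σ x

/-- `G` has mean zero and variance bounded by `V`. -/
def MeanZeroVarLe (G : Measure ℝ) (V : ℝ) : Prop :=
  Integrable (fun θ : ℝ => θ) G ∧ Integrable (fun θ : ℝ => θ ^ 2) G ∧
    (∫ θ, θ ∂G) = 0 ∧ (∫ θ, θ ^ 2 ∂G) ≤ V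

/-- The tail condition `max(1 - G((-∞,s]), G((-∞,-s])) ≤ C s^{-k}` for all `s > 0`. -/
def TailCond (G : Measure ℝ) (C k : ℝ) : Prop :=
  ∀ s : ℝ, 0 < s →
    max (1 - (G (Set.Iic s)).toReal) ((G (Set.Iic (-s))).toReal) ≤ C * s ^ (-k)

/-- Complementary standard Gaussian CDF `Φ̄(x) = ∫_x^∞ (2π)^{-1/2} exp(-t²/2) dt`. -/
noncomputable def compPhi (x : ℝ) : ℝ :=
  ∫ t in Set.Ioi x, (Real.sqrt (2 * Real.pi))⁻¹ * Real.exp (-t ^ 2 / 2)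

lemma gaussDens_nonneg (σ t : ℝ) : 0 ≤ gaussDens σ t := by
  unfold gaussDens; positivity

lemma gaussDens_pos {σ : ℝ} (hσ : 0 < σ) (t : ℝ) : 0 < gaussDens σ t := by
  unfold gaussDens
  have : (0:ℝ) < 2 * Real.pi * σ ^ 2 := by positivity
  positivity

lemma gaussDens_anti {σ : ℝ} (hσ : 0 < σ) {t u : ℝ} (h : t ^ 2 ≤ u ^ 2) :
    gaussDens σ u ≤ gaussDens σ t := by
  unfold gaussDens
  have h2 : (0:ℝ) < 2 * σ ^ 2 := by positivity
  have : Real.exp (-u ^ 2 / (2 * σ ^ 2)) ≤ Real.exp (-t ^ 2 / (2 * σ ^ 2)) := by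
    apply Real.exp_le_exp.2
    apply div_le_div_of_nonneg_right (by linarith) h2.le
  have h3 : (0:ℝ) ≤ (Real.sqrt (2 * Real.pi * σ ^ 2))⁻¹ := by positivity
  exact mul_le_mul_of_nonneg_left this h3

lemma gaussDens_continuous (σ : ℝ) : Continuous (gaussDens σ) := by
  unfold gaussDens
  fun_prop

lemma integrable_gaussDens {σ : ℝ} (hσ : 0 < σ) : Integrable (gaussDens σ) := by
  have hb : (0:ℝ) < (2 * σ ^ 2)⁻¹ := by positivity
  have := (integrable_exp_neg_mul_sq hb).const_mul (Real.sqrt (2 * Real.pi * σ ^ 2))⁻¹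
  refine this.congr ?_
  filter_upwards with x
  unfold gaussDens
  congr 1
  congr 1
  field_simp

lemma integral_gaussDens {σ : ℝ} (hσ : 0 < σ) : ∫ t, gaussDens σ t = 1 := by
  have hb : (0:ℝ) < (2 * σ ^ 2)⁻¹ := by positivity
  have h1 : (fun t : ℝ => gaussDens σ t)
      = fun t : ℝ => (Real.sqrt (2 * Real.pi * σ ^ 2))⁻¹ * Real.exp (-((2 * σ ^ 2)⁻¹) * t ^ 2) := by
    funext t
    unfold gaussDens
    congr 1
    congr 1
    field_simp
  rw [h1, MeasureTheory.integral_const_mul, integral_gaussian]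
  have h2 : Real.pi / (2 * σ ^ 2)⁻¹ = 2 * Real.pi * σ ^ 2 := by
    field_simp
  rw [h2]
  have h3 : Real.sqrt (2 * Real.pi * σ ^ 2) ≠ 0 := by
    have : (0:ℝ) < 2 * Real.pi * σ ^ 2 := by positivity
    positivity
  exact inv_mul_cancel₀ h3

lemma integral_Ioi_zero_gaussDens {σ : ℝ} (hσ : 0 < σ) :
    ∫ t in Ioi (0:ℝ), gaussDens σ t = 1 / 2 := by
  have habs : (fun x : ℝ => gaussDens σ |x|) = gaussDens σ := by
    funext x
    unfold gaussDens
    rw [sq_abs]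
  have h := integral_comp_abs (f := gaussDens σ)
  rw [habs, integral_gaussDens hσ] at h
  linarith

lemma setIntegral_Ioi_comp_sub (f : ℝ → ℝ) (b c : ℝ) :
    ∫ x in Ioi (b + c), f (x - c) = ∫ x in Ioi b, f x := by
  rw [← integral_indicator measurableSet_Ioi, ← integral_indicator measurableSet_Ioi]
  rw [← integral_sub_right_eq_self (fun x => (Ioi b).indicator f x) c]
  congr 1
  funext x
  by_cases h : x - c ∈ Ioi b
  · rw [indicator_of_mem h, indicator_of_mem (by simp only [mem_Ioi] at h ⊢; linarith)]
  · rw [indicator_of_notMem h, indicator_of_notMem (by simp only [mem_Ioi] at h ⊢; intro hc; exact h (by linarith))]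

lemma setIntegral_Iic_comp_sub (f : ℝ → ℝ) (b c : ℝ) :
    ∫ x in Iic (b + c), f (x - c) = ∫ x in Iic b, f x := by
  rw [← integral_indicator measurableSet_Iic, ← integral_indicator measurableSet_Iic]
  rw [← integral_sub_right_eq_self (fun x => (Iic b).indicator f x) c]
  congr 1
  funext x
  by_cases h : x - c ∈ Iic b
  · rw [indicator_of_mem h, indicator_of_mem (by simp only [mem_Iic] at h ⊢; linarith)]
  · rw [indicator_of_notMem h, indicator_of_notMem (by simp only [mem_Iic] at h ⊢; intro hc; exact h (by linarith))]

lemma gaussDens_tail {σ r : ℝ} (hσ : 0 < σ) (hr : 0 ≤ r) :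
    ∫ t in Ioi r, gaussDens σ t ≤ Real.exp (-r ^ 2 / (2 * σ ^ 2)) * (1 / 2) := by
  have key : ∀ t ∈ Ioi r, gaussDens σ t
      ≤ Real.exp (-r ^ 2 / (2 * σ ^ 2)) * gaussDens σ (t - r) := by
    intro t ht
    simp only [mem_Ioi] at ht
    unfold gaussDens
    rw [mul_comm (Real.exp (-r ^ 2 / (2 * σ ^ 2)))]
    rw [mul_assoc ((Real.sqrt (2 * Real.pi * σ ^ 2))⁻¹), ← Real.exp_add]
    have h2 : (0:ℝ) < 2 * σ ^ 2 := by positivity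
    have hexp : -t ^ 2 / (2 * σ ^ 2)
        ≤ -(t - r) ^ 2 / (2 * σ ^ 2) + -r ^ 2 / (2 * σ ^ 2) := by
      rw [← add_div]
      apply div_le_div_of_nonneg_right ?_ h2.le
      nlinarith
    exact mul_le_mul_of_nonneg_left (Real.exp_le_exp.2 hexp) (by positivity)
  have h1 : IntegrableOn (gaussDens σ) (Ioi r) := (integrable_gaussDens hσ).integrableOn
  have h2 : IntegrableOn (fun t => Real.exp (-r ^ 2 / (2 * σ ^ 2)) * gaussDens σ (t - r)) (Ioi r) :=
    (((integrable_gaussDens hσ).comp_sub_right r).const_mul _).integrableOn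
  calc ∫ t in Ioi r, gaussDens σ t
      ≤ ∫ t in Ioi r, Real.exp (-r ^ 2 / (2 * σ ^ 2)) * gaussDens σ (t - r) :=
        setIntegral_mono_on h1 h2 measurableSet_Ioi key
    _ = Real.exp (-r ^ 2 / (2 * σ ^ 2)) * ∫ t in Ioi r, gaussDens σ (t - r) := by
        rw [MeasureTheory.integral_const_mul]
    _ = Real.exp (-r ^ 2 / (2 * σ ^ 2)) * (1 / 2) := by
        congr 1
        have := setIntegral_Ioi_comp_sub (gaussDens σ) 0 r
        rw [zero_add] at this
        rw [this, integral_Ioi_zero_gaussDens hσ]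

lemma gaussDens_tail_Iic {σ r : ℝ} (hσ : 0 < σ) (hr : 0 ≤ r) :
    ∫ t in Iic (-r), gaussDens σ t ≤ Real.exp (-r ^ 2 / (2 * σ ^ 2)) * (1 / 2) := by
  have heven : ∀ x : ℝ, gaussDens σ (-x) = gaussDens σ x := by
    intro x; unfold gaussDens; rw [neg_pow]; norm_num
  have h := integral_comp_neg_Ioi r (gaussDens σ)
  have h2 : ∫ x in Ioi r, gaussDens σ (-x) = ∫ x in Ioi r, gaussDens σ x :=
    setIntegral_congr_fun measurableSet_Ioi (fun x _ => heven x)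
  rw [h2] at h
  rw [← h]
  exact gaussDens_tail hσ hr

lemma integrable_gaussDens_G (G : Measure ℝ) [IsProbabilityMeasure G] {σ : ℝ} (hσ : 0 < σ)
    (x : ℝ) : Integrable (fun θ => gaussDens σ (x - θ)) G := by
  apply Integrable.mono' (integrable_const (gaussDens σ 0))
  · exact ((gaussDens_continuous σ).comp (continuous_const.sub continuous_id)).aestronglyMeasurable
  · filter_upwards with θ
    rw [Real.norm_eq_abs, abs_of_nonneg (gaussDens_nonneg _ _)]
    exact gaussDens_anti hσ (by nlinarith [sq_nonneg (x - θ)])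

lemma cheb (G : Measure ℝ) [IsProbabilityMeasure G] {V : ℝ} (hV : 0 < V)
    (hint : Integrable (fun θ : ℝ => θ ^ 2) G) (hvar : (∫ θ, θ ^ 2 ∂G) ≤ V) :
    (1:ℝ) / 2 ≤ (G (Icc (-Real.sqrt (2 * V)) (Real.sqrt (2 * V)))).toReal := by
  set a := Real.sqrt (2 * V) with ha
  have ha2 : a ^ 2 = 2 * V := Real.sq_sqrt (by linarith)
  have hmarkov := mul_meas_ge_le_integral_of_nonneg
    (f := fun θ : ℝ => θ ^ 2) (μ := G)
    (Filter.Eventually.of_forall fun θ => sq_nonneg θ) hint (2 * V)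
  -- simpler: complement inclusion
  have hsub2 : (Icc (-a) a)ᶜ ⊆ {θ : ℝ | 2 * V ≤ θ ^ 2} := by
    intro θ hθ
    simp only [mem_compl_iff, mem_Icc, not_and_or, not_le] at hθ
    simp only [mem_setOf_eq]
    have ha0 : 0 ≤ a := Real.sqrt_nonneg _
    rcases hθ with h | h
    · nlinarith [sq_nonneg (θ + a)]
    · nlinarith [sq_nonneg (θ - a)]
  have hm : (G {θ : ℝ | 2 * V ≤ θ ^ 2}).toReal ≤ 1 / 2 := by
    have hle : 2 * V * (G {θ : ℝ | 2 * V ≤ θ ^ 2}).toReal ≤ V := le_trans hmarkov hvar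
    nlinarith [ENNReal.toReal_nonneg (a := G {θ : ℝ | 2 * V ≤ θ ^ 2})]
  have hcompl : (G (Icc (-a) a)ᶜ).toReal ≤ 1 / 2 := by
    refine le_trans ?_ hm
    exact ENNReal.toReal_mono (measure_ne_top _ _) (measure_mono hsub2)
  have h1 : (G (Icc (-a) a)).toReal = 1 - (G (Icc (-a) a)ᶜ).toReal := by
    have := prob_compl_eq_one_sub (μ := G) (measurableSet_Icc (a := -a) (b := a))
    rw [this, ENNReal.toReal_sub_of_le (prob_le_one) (by simp)]
    simp
  rw [h1]; linarith

lemma margDens_lb (G : Measure ℝ) [IsProbabilityMeasure G] {σ V : ℝ} (hσ : 0 < σ) (hV : 0 < V)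
    (hint : Integrable (fun θ : ℝ => θ ^ 2) G) (hvar : (∫ θ, θ ^ 2 ∂G) ≤ V) (x : ℝ) :
    gaussDens σ (|x| + Real.sqrt (2 * V)) * (1 / 2) ≤ margDens G σ x := by
  set a := Real.sqrt (2 * V) with ha
  have ha0 : 0 ≤ a := Real.sqrt_nonneg _
  have hIG : Integrable (fun θ => gaussDens σ (x - θ)) G := integrable_gaussDens_G G hσ x
  have step1 : ∫ θ in Icc (-a) a, gaussDens σ (|x| + a) ∂G
      ≤ ∫ θ in Icc (-a) a, gaussDens σ (x - θ) ∂G := by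
    apply setIntegral_mono_on (integrableOn_const (measure_ne_top G _))
      hIG.integrableOn measurableSet_Icc
    intro θ hθ
    apply gaussDens_anti hσ
    have h1 : |x - θ| ≤ |x| + a := by
      calc |x - θ| ≤ |x| + |θ| := abs_sub x θ
        _ ≤ |x| + a := by
            have := abs_le.mpr ⟨hθ.1, hθ.2⟩; linarith
    calc (x - θ) ^ 2 = |x - θ| ^ 2 := (sq_abs _).symm
      _ ≤ (|x| + a) ^ 2 := by
          apply pow_le_pow_left₀ (abs_nonneg _) h1
  have step2 : ∫ θ in Icc (-a) a, gaussDens σ (x - θ) ∂G ≤ margDens G σ x := by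
    unfold margDens
    apply setIntegral_le_integral hIG
    filter_upwards with θ using gaussDens_nonneg _ _
  have step0 : gaussDens σ (|x| + a) * (1 / 2)
      ≤ ∫ θ in Icc (-a) a, gaussDens σ (|x| + a) ∂G := by
    rw [setIntegral_const, smul_eq_mul, mul_comm]
    exact mul_le_mul_of_nonneg_right (cheb G hV hint hvar) (gaussDens_nonneg _ _)
  linarith

lemma margDens_pos (G : Measure ℝ) [IsProbabilityMeasure G] {σ V : ℝ} (hσ : 0 < σ) (hV : 0 < V)
    (hint : Integrable (fun θ : ℝ => θ ^ 2) G) (hvar : (∫ θ, θ ^ 2 ∂G) ≤ V) (x : ℝ) :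
    0 < margDens G σ x := by
  have := margDens_lb G hσ hV hint hvar x
  have := gaussDens_pos hσ (|x| + Real.sqrt (2 * V))
  linarith

lemma postSurv_nonneg (G : Measure ℝ) [IsProbabilityMeasure G] {σ V : ℝ} (hσ : 0 < σ)
    (hV : 0 < V) (hint : Integrable (fun θ : ℝ => θ ^ 2) G)
    (hvar : (∫ θ, θ ^ 2 ∂G) ≤ V) (s x : ℝ) : 0 ≤ postSurv G σ s x := by
  unfold postSurv
  apply div_nonneg _ (margDens_pos G hσ hV hint hvar x).le
  apply setIntegral_nonneg measurableSet_Ioi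
  intro θ _; exact gaussDens_nonneg _ _

lemma postSurv_le_one (G : Measure ℝ) [IsProbabilityMeasure G] {σ V : ℝ} (hσ : 0 < σ)
    (hV : 0 < V) (hint : Integrable (fun θ : ℝ => θ ^ 2) G)
    (hvar : (∫ θ, θ ^ 2 ∂G) ≤ V) (s x : ℝ) : postSurv G σ s x ≤ 1 := by
  unfold postSurv
  rw [div_le_one (margDens_pos G hσ hV hint hvar x)]
  unfold margDens
  apply setIntegral_le_integral (integrable_gaussDens_G G hσ x)
  filter_upwards with θ using gaussDens_nonneg _ _

lemma num_ub (G : Measure ℝ) [IsProbabilityMeasure G] {σ : ℝ} (hσ : 0 < σ) (s x : ℝ) :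
    ∫ θ in Ioi s, gaussDens σ (x - θ) ∂G ≤ (G (Ioi s)).toReal * gaussDens σ 0 := by
  calc ∫ θ in Ioi s, gaussDens σ (x - θ) ∂G
      ≤ ∫ _θ in Ioi s, gaussDens σ 0 ∂G := by
        apply setIntegral_mono_on (integrable_gaussDens_G G hσ x).integrableOn
          (integrableOn_const (measure_ne_top G _)) measurableSet_Ioi
        intro θ _
        exact gaussDens_anti hσ (by nlinarith [sq_nonneg (x - θ)])
    _ = (G (Ioi s)).toReal * gaussDens σ 0 := by rw [setIntegral_const, smul_eq_mul, measureReal_def]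

lemma postSurv_ub (G : Measure ℝ) [IsProbabilityMeasure G] {σ V : ℝ} (hσ : 0 < σ) (hV : 0 < V)
    (hint : Integrable (fun θ : ℝ => θ ^ 2) G) (hvar : (∫ θ, θ ^ 2 ∂G) ≤ V) (s x : ℝ) :
    postSurv G σ s x ≤ (G (Ioi s)).toReal * gaussDens σ 0
      / (gaussDens σ (|x| + Real.sqrt (2 * V)) * (1 / 2)) := by
  unfold postSurv
  have h1 : 0 ≤ (G (Ioi s)).toReal * gaussDens σ 0 :=
    mul_nonneg ENNReal.toReal_nonneg (gaussDens_nonneg _ _)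
  have h2 : 0 < gaussDens σ (|x| + Real.sqrt (2 * V)) * (1 / 2) := by
    have := gaussDens_pos hσ (|x| + Real.sqrt (2 * V)); linarith
  exact div_le_div₀ h1 (num_ub G hσ s x) h2 (margDens_lb G hσ hV hint hvar x)

set_option maxHeartbeats 1000000 in
/-- with `K = exp(max(1, 4k²/(k-2)²))`, for `σ ≥ 1`, `|μ| < σ`, `s > K`,
`∫ S_{G1,σ}(s,x) φ_σ(x-μ) dx ≤ C (1 - G1((-∞,s])) s^{(k-2)/2} + s^{-k²/2}`,
with `C` depending only on `V`. -/
theorem stmt_13 (V k : ℝ) (hV : 0 < V) (hk : 2 < k) :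
    ∃ C : ℝ, ∀ (G1 : Measure ℝ) [IsProbabilityMeasure G1] (σ μ s : ℝ),
      MeanZeroVarLe G1 V → 1 ≤ σ → |μ| < σ →
      Real.exp (max 1 (4 * k ^ 2 / (k - 2) ^ 2)) < s →
      (∫ x, postSurv G1 σ s x * gaussDens σ (x - μ))
        ≤ C * (1 - (G1 (Set.Iic s)).toReal) * s ^ ((k - 2) / 2) +
          s ^ (-(k ^ 2) / 2) := by
  unfold MeanZeroVarLe at *
  set a := Real.sqrt (2 * V) with ha
  have ha0 : 0 ≤ a := Real.sqrt_nonneg _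
  refine ⟨4 * Real.exp ((1 + a) ^ 2 / 2 + ((2 + a) * k) ^ 2 / (2 * (k - 2))), ?_⟩
  intro G1 _ σ μ s hG hσ1 hμ hs
  set C := 4 * Real.exp ((1 + a) ^ 2 / 2 + ((2 + a) * k) ^ 2 / (2 * (k - 2))) with hC
  obtain ⟨hint1, hint2, hmean, hvar⟩ := hG
  have hσ : (0:ℝ) < σ := lt_of_lt_of_le one_pos hσ1
  have hs1 : (1:ℝ) < s := by
    have h1 : (1:ℝ) ≤ max 1 (4 * k ^ 2 / (k - 2) ^ 2) := le_max_left _ _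
    have h2 : Real.exp 1 ≤ Real.exp (max 1 (4 * k ^ 2 / (k - 2) ^ 2)) := Real.exp_le_exp.2 h1
    have h3 : (1:ℝ) < Real.exp 1 := by
      have := Real.add_one_le_exp (1:ℝ); linarith
    linarith
  have hs0 : (0:ℝ) < s := by linarith
  have hlog : (0:ℝ) ≤ Real.log s := Real.log_nonneg hs1.le
  set L := Real.sqrt (Real.log s) with hLdef
  have hL2 : L ^ 2 = Real.log s := Real.sq_sqrt hlog
  have hL0 : (0:ℝ) ≤ L := Real.sqrt_nonneg _
  have hkL0 : (0:ℝ) ≤ k * L := mul_nonneg (by linarith) hL0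
  set r := σ * (k * L) with hrdef
  have hr0 : (0:ℝ) ≤ r := mul_nonneg hσ.le hkL0
  set Gp := (G1 (Ioi s)).toReal with hGpdef
  have hGp0 : (0:ℝ) ≤ Gp := ENNReal.toReal_nonneg
  have hsum : (G1 (Iic s)).toReal + Gp = 1 := by
    rw [hGpdef, ← ENNReal.toReal_add (measure_ne_top _ _) (measure_ne_top _ _),
      ← measure_union (Iic_disjoint_Ioi le_rfl) measurableSet_Ioi, Iic_union_Ioi,
      measure_univ, ENNReal.toReal_one]
  set cσ := (Real.sqrt (2 * Real.pi * σ ^ 2))⁻¹ with hcσ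
  have hcσ0 : 0 < cσ := by
    rw [hcσ]
    have : (0:ℝ) < 2 * Real.pi * σ ^ 2 := by positivity
    positivity
  have hg0 : gaussDens σ 0 = cσ := by
    unfold gaussDens; norm_num; exact hcσ.symm
  set E0 := (1 + a) ^ 2 / 2 + (1 + a) * (k * L) with hE0
  set c1 := 2 * Gp * Real.exp E0 * cσ with hc1
  have hc10 : 0 ≤ c1 := by positivity
  set A := Icc (μ - r) (μ + r) with hA
  set g : ℝ → ℝ := fun x =>
    A.indicator (fun _ => c1) x + Aᶜ.indicator (fun x => gaussDens σ (x - μ)) x with hg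
  -- pointwise bound
  have hpt : ∀ x, postSurv G1 σ s x * gaussDens σ (x - μ) ≤ g x := by
    intro x
    by_cases hx : x ∈ A
    · have hgx : g x = c1 := by
        have hxc : x ∉ Aᶜ := fun h => h hx
        simp only [hg]
        rw [indicator_of_mem hx, indicator_of_notMem hxc, add_zero]
      rw [hgx]
      have hS := postSurv_ub G1 hσ hV hint2 hvar s x
      have hB : (|x| + a) ^ 2 - (x - μ) ^ 2
          ≤ 2 * σ ^ 2 * ((1 + a) ^ 2 / 2 + (1 + a) * (k * L)) := by
        have hD : |x - μ| ≤ σ * (k * L) := by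
          rw [hA, mem_Icc, hrdef] at hx
          rw [abs_le]
          exact ⟨by linarith [hx.1], by linarith [hx.2]⟩
        have hX : |x| ≤ |μ| + |x - μ| := by
          calc |x| = |μ + (x - μ)| := by ring_nf
            _ ≤ |μ| + |x - μ| := abs_add_le _ _
        have hM : |μ| ≤ σ := hμ.le
        have hDsq : (x - μ) ^ 2 = |x - μ| ^ 2 := (sq_abs _).symm
        have habs2 : (0:ℝ) ≤ |x - μ| := abs_nonneg _
        have h2 : (|x| + a) ^ 2 ≤ (|μ| + |x - μ| + a) ^ 2 := by
          apply pow_le_pow_left₀ (by positivity) (by linarith)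
        have hMD : |μ| * |x - μ| ≤ σ * (σ * (k * L)) := mul_le_mul hM hD habs2 hσ.le
        have hMa : |μ| * a ≤ σ * a := mul_le_mul_of_nonneg_right hM ha0
        have haD : a * |x - μ| ≤ a * (σ * (k * L)) := mul_le_mul_of_nonneg_left hD ha0
        have hM2 : |μ| * |μ| ≤ σ * σ := mul_le_mul hM hM (abs_nonneg _) hσ.le
        have hsa : 1 * (σ * a) ≤ σ * (σ * a) :=
          mul_le_mul_of_nonneg_right hσ1 (by positivity)
        have haσt : 1 * (a * (σ * (k * L))) ≤ σ * (a * (σ * (k * L))) :=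
          mul_le_mul_of_nonneg_right hσ1 (by positivity)
        have ha2a : 1 * (a * a) ≤ σ * (a * a) :=
          mul_le_mul_of_nonneg_right hσ1 (by positivity)
        have ha2b : σ * (a * a) ≤ σ * (σ * (a * a)) :=
          mul_le_mul_of_nonneg_left (by linarith) hσ.le
        rw [hDsq]
        linarith [h2, hMD, hMa, haD, hM2, hsa, haσt, ha2a, ha2b]
      calc postSurv G1 σ s x * gaussDens σ (x - μ)
          ≤ (Gp * gaussDens σ 0 / (gaussDens σ (|x| + a) * (1 / 2)))
              * gaussDens σ (x - μ) :=
            mul_le_mul_of_nonneg_right hS (gaussDens_nonneg _ _)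
        _ ≤ c1 := by
            rw [hg0, hc1]
            unfold gaussDens
            rw [← hcσ]
            have hexp1 : (0:ℝ) < Real.exp (-(|x| + a) ^ 2 / (2 * σ ^ 2)) := Real.exp_pos _
            have hexp2 : (0:ℝ) < Real.exp (-(x - μ) ^ 2 / (2 * σ ^ 2)) := Real.exp_pos _
            have key : Real.exp (-(x - μ) ^ 2 / (2 * σ ^ 2))
                ≤ Real.exp E0 * Real.exp (-(|x| + a) ^ 2 / (2 * σ ^ 2)) := by
              rw [← Real.exp_add]
              apply Real.exp_le_exp.2
              have h2σ : (0:ℝ) < 2 * σ ^ 2 := by positivity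
              have hdiv := div_le_div_of_nonneg_right hB h2σ.le
              rw [mul_div_cancel_left₀ _ (ne_of_gt h2σ)] at hdiv
              rw [sub_div] at hdiv
              rw [hE0, neg_div, neg_div]
              linarith
            rw [div_mul_eq_mul_div, div_le_iff₀ (by positivity)]
            calc Gp * cσ * (cσ * Real.exp (-(x - μ) ^ 2 / (2 * σ ^ 2)))
                ≤ Gp * cσ * (cσ * (Real.exp E0 * Real.exp (-(|x| + a) ^ 2 / (2 * σ ^ 2)))) := by
                  apply mul_le_mul_of_nonneg_left _ (by positivity)
                  exact mul_le_mul_of_nonneg_left key hcσ0.le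
              _ = 2 * Gp * Real.exp E0 * cσ * (cσ * Real.exp (-(|x| + a) ^ 2 / (2 * σ ^ 2)) * (1 / 2)) := by
                  ring
    · have hgx : g x = gaussDens σ (x - μ) := by
        rw [hg]
        simp only [indicator_of_notMem hx, indicator_of_mem (mem_compl hx)]
        ring
      rw [hgx]
      exact mul_le_of_le_one_left (gaussDens_nonneg _ _)
        (postSurv_le_one G1 hσ hV hint2 hvar s x)
  -- integrability of g
  have hAmeas : MeasurableSet A := measurableSet_Icc
  have hg1int : Integrable (A.indicator (fun _ : ℝ => c1)) := by
    rw [integrable_indicator_iff hAmeas]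
    exact integrableOn_const (by rw [hA, Real.volume_Icc]; exact ENNReal.ofReal_ne_top)
  have hg2int : Integrable (Aᶜ.indicator (fun x => gaussDens σ (x - μ))) :=
    ((integrable_gaussDens hσ).comp_sub_right μ).indicator hAmeas.compl
  -- main inequality
  have hmain : (∫ x, postSurv G1 σ s x * gaussDens σ (x - μ)) ≤ ∫ x, g x := by
    apply integral_mono_of_nonneg
    · filter_upwards with x
      exact mul_nonneg (postSurv_nonneg G1 hσ hV hint2 hvar s x) (gaussDens_nonneg _ _)
    · exact hg1int.add hg2int
    · filter_upwards with x using hpt x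
  have hsplit : (∫ x, g x) = (∫ x, A.indicator (fun _ => c1) x)
      + ∫ x, Aᶜ.indicator (fun x => gaussDens σ (x - μ)) x := integral_add hg1int hg2int
  -- first part
  have hpart1 : (∫ x, A.indicator (fun _ => c1) x) = 2 * r * c1 := by
    rw [integral_indicator hAmeas, setIntegral_const, smul_eq_mul, measureReal_def, hA, Real.volume_Icc,
      ENNReal.toReal_ofReal (by linarith)]
    ring
  -- second part
  have hpart2 : (∫ x, Aᶜ.indicator (fun x => gaussDens σ (x - μ)) x)
      ≤ Real.exp (-r ^ 2 / (2 * σ ^ 2)) := by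
    have hcompl : Aᶜ = Iio (μ - r) ∪ Ioi (μ + r) := by
      rw [hA]
      ext y
      simp only [mem_compl_iff, mem_Icc, mem_union, mem_Iio, mem_Ioi, not_and_or, not_le]
    rw [integral_indicator hAmeas.compl, hcompl]
    have hdisj : Disjoint (Iio (μ - r)) (Ioi (μ + r)) := by
      rw [disjoint_left]
      intro x h1 h2
      simp only [mem_Iio] at h1
      simp only [mem_Ioi] at h2
      linarith
    have hIntOn1 : IntegrableOn (fun x => gaussDens σ (x - μ)) (Iio (μ - r)) :=
      ((integrable_gaussDens hσ).comp_sub_right μ).integrableOn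
    have hIntOn2 : IntegrableOn (fun x => gaussDens σ (x - μ)) (Ioi (μ + r)) :=
      ((integrable_gaussDens hσ).comp_sub_right μ).integrableOn
    rw [setIntegral_union hdisj measurableSet_Ioi hIntOn1 hIntOn2]
    have hT1 : (∫ x in Iio (μ - r), gaussDens σ (x - μ)) ≤ Real.exp (-r ^ 2 / (2 * σ ^ 2)) * (1 / 2) := by
      rw [← integral_Iic_eq_integral_Iio]
      have := setIntegral_Iic_comp_sub (gaussDens σ) (-r) μ
      rw [show -r + μ = μ - r by ring] at this
      rw [this]
      exact gaussDens_tail_Iic hσ hr0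
    have hT2 : (∫ x in Ioi (μ + r), gaussDens σ (x - μ)) ≤ Real.exp (-r ^ 2 / (2 * σ ^ 2)) * (1 / 2) := by
      have := setIntegral_Ioi_comp_sub (gaussDens σ) r μ
      rw [show r + μ = μ + r by ring] at this
      rw [this]
      exact gaussDens_tail hσ hr0
    linarith
  -- tail equals s ^ (-(k^2)/2)
  have htail : Real.exp (-r ^ 2 / (2 * σ ^ 2)) = s ^ (-(k ^ 2) / 2) := by
    rw [Real.rpow_def_of_pos hs0]
    congr 1
    rw [hrdef]
    have : (σ * (k * L)) ^ 2 = σ ^ 2 * (k ^ 2 * L ^ 2) := by ring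
    rw [this, hL2]
    field_simp
  -- first part final bound
  have hkey : 2 * r * c1 ≤ C * Gp * s ^ ((k - 2) / 2) := by
    have hσcσ : σ * cσ ≤ 1 := by
      rw [hcσ]
      have hsq : Real.sqrt (σ ^ 2) ≤ Real.sqrt (2 * Real.pi * σ ^ 2) := by
        apply Real.sqrt_le_sqrt
        nlinarith [Real.pi_gt_three, sq_nonneg σ]
      have hσsq : Real.sqrt (σ ^ 2) = σ := by
        rw [Real.sqrt_sq hσ.le]
      have hpos : (0:ℝ) < Real.sqrt (2 * Real.pi * σ ^ 2) := by
        have : (0:ℝ) < 2 * Real.pi * σ ^ 2 := by positivity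
        positivity
      rw [mul_inv_le_iff₀ hpos, one_mul]
      linarith
    have hkL_le : k * L ≤ Real.exp (k * L) := by
      have := Real.add_one_le_exp (k * L); linarith
    have hexp_split : Real.exp E0 = Real.exp ((1 + a) ^ 2 / 2) * Real.exp ((1 + a) * (k * L)) := by
      rw [hE0, Real.exp_add]
    have hquad : (2 + a) * (k * L) ≤ ((2 + a) * k) ^ 2 / (2 * (k - 2)) + (k - 2) / 2 * L ^ 2 := by
      have hk2 : (0:ℝ) < k - 2 := by linarith
      have hsq := sq_nonneg ((2 + a) * k - (k - 2) * L)
      have h1 : (2 + a) * (k * L) * (2 * (k - 2)) ≤ (((2 + a) * k) ^ 2 + (k - 2) ^ 2 * L ^ 2) := by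
        linarith [hsq]
      have h2 : ((2 + a) * k) ^ 2 / (2 * (k - 2)) + (k - 2) / 2 * L ^ 2
          = (((2 + a) * k) ^ 2 + (k - 2) ^ 2 * L ^ 2) / (2 * (k - 2)) := by
        field_simp
      rw [h2, le_div_iff₀ (by linarith : (0:ℝ) < 2 * (k - 2))]
      exact h1
    have hrpow : s ^ ((k - 2) / 2) = Real.exp (Real.log s * ((k - 2) / 2)) :=
      Real.rpow_def_of_pos hs0 _
    calc 2 * r * c1 = 4 * Gp * (k * L) * Real.exp E0 * (σ * cσ) := by
          rw [hrdef, hc1]; ring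
      _ ≤ 4 * Gp * (k * L) * Real.exp E0 * 1 := by
          apply mul_le_mul_of_nonneg_left hσcσ (by positivity)
      _ = 4 * Gp * ((k * L) * Real.exp ((1 + a) ^ 2 / 2) * Real.exp ((1 + a) * (k * L))) := by
          rw [hexp_split]; ring
      _ ≤ 4 * Gp * (Real.exp (k * L) * Real.exp ((1 + a) ^ 2 / 2) * Real.exp ((1 + a) * (k * L))) := by
          apply mul_le_mul_of_nonneg_left _ (by positivity)
          apply mul_le_mul_of_nonneg_right _ (Real.exp_pos _).le
          exact mul_le_mul_of_nonneg_right hkL_le (Real.exp_pos _).le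
      _ = 4 * Gp * Real.exp (k * L + ((1 + a) ^ 2 / 2 + (1 + a) * (k * L))) := by
          rw [Real.exp_add, Real.exp_add]
          ring
      _ = 4 * Gp * Real.exp ((1 + a) ^ 2 / 2 + (2 + a) * (k * L)) := by
          have harg : k * L + ((1 + a) ^ 2 / 2 + (1 + a) * (k * L))
              = (1 + a) ^ 2 / 2 + (2 + a) * (k * L) := by ring
          rw [harg]
      _ ≤ 4 * Gp * Real.exp ((1 + a) ^ 2 / 2 + (((2 + a) * k) ^ 2 / (2 * (k - 2)) + (k - 2) / 2 * L ^ 2)) := by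
          apply mul_le_mul_of_nonneg_left _ (by positivity)
          apply Real.exp_le_exp.2
          linarith
      _ = C * Gp * s ^ ((k - 2) / 2) := by
          have harg2 : (1 + a) ^ 2 / 2 + (((2 + a) * k) ^ 2 / (2 * (k - 2)) + (k - 2) / 2 * L ^ 2)
              = ((1 + a) ^ 2 / 2 + ((2 + a) * k) ^ 2 / (2 * (k - 2))) + Real.log s * ((k - 2) / 2) := by
            rw [hL2]; ring
          rw [harg2, Real.exp_add, hC, hrpow]
          ring
  -- conclude
  have hGpeq : 1 - (G1 (Iic s)).toReal = Gp := by linarith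
  calc (∫ x, postSurv G1 σ s x * gaussDens σ (x - μ))
      ≤ ∫ x, g x := hmain
    _ = (∫ x, A.indicator (fun _ => c1) x) + ∫ x, Aᶜ.indicator (fun x => gaussDens σ (x - μ)) x := hsplit
    _ ≤ 2 * r * c1 + Real.exp (-r ^ 2 / (2 * σ ^ 2)) := by
        rw [hpart1]; linarith
    _ ≤ C * Gp * s ^ ((k - 2) / 2) + s ^ (-(k ^ 2) / 2) := by
        rw [← htail]; linarith
    _ = C * (1 - (G1 (Iic s)).toReal) * s ^ ((k - 2) / 2) + s ^ (-(k ^ 2) / 2) := by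
        rw [hGpeq]
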